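/- Let (X_t) be the (n,k)-Bernoulli–Laplace chain. Then for all t ≥ 0 and all initial states X₀ ∈ {0,...,n}, E_{X₀}[f₁(X_t)] = (1 − 2k/n)^t · f₁(X₀), where f₁(x) = 1 − 2x/n. -/

import Mathlib

/-- The hypergeometric pmf: probability that a uniform `k`-subset of `n` objects,
`ℓ` of which are of type 1, contains exactly `a` objects of type 1. -/
noncomputable def hyperPMF (n ℓ k a : ℕ) : ℝ :=
  ((ℓ.choose a * (n - ℓ).choose (k - a) : ℕ) : ℝ) / ((n.choose k : ℕ) : ℝ)

/-- One-step transition probability of the (n,k)-Bernoulli–Laplace chain: from `x` red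
balls in the left urn, `a` red balls leave (hypergeometric from the left urn) and `b`
red balls enter (hypergeometric from the right urn, which contains `n - x` red balls). -/
noncomputable def blTrans (n k x y : ℕ) : ℝ :=
  ∑ a ∈ Finset.range (k + 1), ∑ b ∈ Finset.range (k + 1),
    if (x : ℤ) - a + b = y then hyperPMF n x k a * hyperPMF n (n - x) k b else 0

/-- The transition operator of the (n,k)-Bernoulli–Laplace chain acting on functions:
`(blStep n k g) x = E_x[g(X₁)]`. -/
noncomputable def blStep (n k : ℕ) (g : ℕ → ℝ) (x : ℕ) : ℝ :=
  ∑ y ∈ Finset.range (n + 1), blTrans n k x y * g y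

/-- The first eigenfunction `f₁(x) = 1 - 2x/n`. -/
noncomputable def f1 (n : ℕ) (x : ℝ) : ℝ := 1 - 2 * x / (n : ℝ)

lemma vand (n ℓ k : ℕ) (hℓ : ℓ ≤ n) :
    ∑ a ∈ Finset.range (k+1), ℓ.choose a * (n-ℓ).choose (k-a) = n.choose k := by
  have h := Nat.add_choose_eq ℓ (n - ℓ) k
  rw [Nat.add_sub_cancel' hℓ] at h
  rw [h, Finset.Nat.sum_antidiagonal_eq_sum_range_succ_mk]

lemma mean_nat (n ℓ k : ℕ) (hℓ : ℓ ≤ n) :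
    ∑ a ∈ Finset.range (k+2), a * (ℓ.choose a * (n-ℓ).choose (k+1-a))
      = ℓ * (n-1).choose k := by
  cases ℓ with
  | zero =>
    simp only [Nat.zero_mul]
    apply Finset.sum_eq_zero
    intro a _
    cases a with
    | zero => simp
    | succ a' => simp [Nat.choose_zero_succ]
  | succ m =>
    rw [Finset.sum_range_succ']
    simp only [Nat.zero_mul, add_zero]
    have key : ∀ a' : ℕ, (a'+1) * ((m+1).choose (a'+1) * (n-(m+1)).choose (k+1-(a'+1)))
        = (m+1) * (m.choose a' * ((n-1)-m).choose (k-a')) := by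
      intro a'
      have h1 : (m+1) * m.choose a' = (m+1).choose (a'+1) * (a'+1) :=
        Nat.add_one_mul_choose_eq m a'
      have h2 : n - (m+1) = (n-1) - m := by omega
      have h3 : k + 1 - (a'+1) = k - a' := by omega
      rw [h2, h3]
      calc (a'+1) * ((m+1).choose (a'+1) * ((n-1)-m).choose (k-a'))
          = ((m+1).choose (a'+1) * (a'+1)) * ((n-1)-m).choose (k-a') := by ring
        _ = ((m+1) * m.choose a') * ((n-1)-m).choose (k-a') := by rw [h1]
        _ = (m+1) * (m.choose a' * ((n-1)-m).choose (k-a')) := by ring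
    rw [Finset.sum_congr rfl (fun a' _ => key a'), ← Finset.mul_sum,
      vand (n-1) m k (by omega)]

lemma choose_ne (n k : ℕ) (hk : k ≤ n) : ((n.choose k : ℕ) : ℝ) ≠ 0 := by
  exact_mod_cast (Nat.choose_pos hk).ne'

lemma sum_hyperPMF (n ℓ k : ℕ) (hℓ : ℓ ≤ n) (hk : k ≤ n) :
    ∑ a ∈ Finset.range (k+1), hyperPMF n ℓ k a = 1 := by
  unfold hyperPMF
  rw [← Finset.sum_div, ← Nat.cast_sum, vand n ℓ k hℓ,
    div_self (choose_ne n k hk)]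

lemma mean_hyperPMF (n ℓ k : ℕ) (hℓ : ℓ ≤ n) (hk : k ≤ n) (hn : 0 < n) :
    ∑ a ∈ Finset.range (k+1), (a : ℝ) * hyperPMF n ℓ k a = k * ℓ / n := by
  cases k with
  | zero => simp
  | succ k' =>
    unfold hyperPMF
    have h1 : ∑ a ∈ Finset.range (k'+2), (a : ℝ) *
        (((ℓ.choose a * (n-ℓ).choose (k'+1-a) : ℕ) : ℝ) / ((n.choose (k'+1) : ℕ) : ℝ))
        = ((ℓ * (n-1).choose k' : ℕ) : ℝ) / ((n.choose (k'+1) : ℕ) : ℝ) := by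
      rw [← mean_nat n ℓ k' hℓ, Nat.cast_sum, Finset.sum_div]
      apply Finset.sum_congr rfl
      intro a _
      push_cast
      ring
    rw [h1]
    rw [div_eq_div_iff (choose_ne n (k'+1) hk) (by exact_mod_cast hn.ne')]
    have h2 : n * (n-1).choose k' = n.choose (k'+1) * (k'+1) := by
      obtain ⟨m, rfl⟩ := Nat.exists_eq_succ_of_ne_zero hn.ne'
      simpa using Nat.add_one_mul_choose_eq m k'
    have := congrArg (fun z : ℕ => (z : ℝ)) h2
    push_cast at this ⊢
    nlinarith [this]

lemma bl_inner_sum (n k x a b : ℕ) (hn : 0 < n) (hx : x ≤ n) (ha : a ≤ k) (hb : b ≤ k)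
    (g : ℝ → ℝ) :
    ∑ y ∈ Finset.range (n+1),
      (if (x : ℤ) - a + b = y then hyperPMF n x k a * hyperPMF n (n - x) k b * g y else 0)
      = hyperPMF n x k a * hyperPMF n (n - x) k b * g ((x : ℝ) - a + b) := by
  by_cases hax : a ≤ x
  · by_cases hbx : b ≤ n - x
    · set y0 := x - a + b with hy0
      have hyn : y0 ≤ n := by omega
      have hcond : ∀ y : ℕ, ((x : ℤ) - a + b = y) ↔ (y = y0) := by
        intro y; omega
      have : (∑ y ∈ Finset.range (n+1),
          (if (x : ℤ) - a + b = y then hyperPMF n x k a * hyperPMF n (n - x) k b * g y else 0))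
          = ∑ y ∈ Finset.range (n+1),
          (if y = y0 then hyperPMF n x k a * hyperPMF n (n - x) k b * g y else 0) := by
        apply Finset.sum_congr rfl
        intro y _
        exact if_congr (hcond y) rfl rfl
      rw [this, Finset.sum_ite_eq' (Finset.range (n+1)) y0]
      rw [if_pos (Finset.mem_range.mpr (by omega))]
      congr 1
      have : ((y0 : ℕ) : ℝ) = (x : ℝ) - a + b := by
        rw [hy0]; push_cast [hax]; ring
      rw [this]
    · have hq : hyperPMF n (n - x) k b = 0 := by
        unfold hyperPMF
        rw [Nat.choose_eq_zero_of_lt (by omega)]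
        simp
      simp [hq]
  · have hp : hyperPMF n x k a = 0 := by
      unfold hyperPMF
      rw [Nat.choose_eq_zero_of_lt (by omega)]
      simp
    simp [hp]

lemma step_f1 (n k x : ℕ) (hn : 0 < n) (hk : k ≤ n) (hx : x ≤ n) :
    blStep n k (fun y : ℕ => f1 n y) x = (1 - 2 * (k : ℝ) / n) * f1 n x := by
  unfold blStep blTrans
  simp only [Finset.sum_mul, ite_mul, zero_mul]
  rw [Finset.sum_comm]
  have hswap : ∀ a ∈ Finset.range (k+1),
      (∑ y ∈ Finset.range (n+1), ∑ b ∈ Finset.range (k+1),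
        if (x : ℤ) - a + b = y then
          hyperPMF n x k a * hyperPMF n (n - x) k b * f1 n y else 0)
      = ∑ b ∈ Finset.range (k+1),
          hyperPMF n x k a * hyperPMF n (n - x) k b * f1 n ((x : ℝ) - a + b) := by
    intro a ha
    rw [Finset.mem_range] at ha
    rw [Finset.sum_comm]
    apply Finset.sum_congr rfl
    intro b hb
    rw [Finset.mem_range] at hb
    exact bl_inner_sum n k x a b hn hx (by omega) (by omega) (f1 n)
  rw [Finset.sum_congr rfl hswap]
  have hexp : ∀ a ∈ Finset.range (k+1), ∀ b ∈ Finset.range (k+1),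
      hyperPMF n x k a * hyperPMF n (n - x) k b * f1 n ((x : ℝ) - a + b)
      = hyperPMF n x k a * hyperPMF n (n - x) k b * f1 n x
        + (2 / n) * (((a:ℝ) * hyperPMF n x k a) * hyperPMF n (n - x) k b)
        - (2 / n) * (hyperPMF n x k a * ((b:ℝ) * hyperPMF n (n - x) k b)) := by
    intro a _ b _
    unfold f1
    ring
  rw [Finset.sum_congr rfl (fun a ha => Finset.sum_congr rfl (hexp a ha))]
  have S0x := sum_hyperPMF n x k hx hk
  have S0x' := sum_hyperPMF n (n - x) k (by omega) hk
  have S1x := mean_hyperPMF n x k hx hk hn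
  have S1x' := mean_hyperPMF n (n - x) k (by omega) hk hn
  simp only [Finset.sum_sub_distrib, Finset.sum_add_distrib, ← Finset.sum_mul,
    ← Finset.mul_sum]
  rw [S0x', S1x', S0x, S1x]
  have hnx : ((n - x : ℕ) : ℝ) = (n : ℝ) - x := by push_cast [hx]; ring
  rw [hnx]
  unfold f1
  have hn' : (n : ℝ) ≠ 0 := by exact_mod_cast hn.ne'
  field_simp
  ring

/-- `E_{X₀}[f₁(X_t)] = (1 - 2k/n)^t f₁(X₀)`. -/
theorem expectation_f1 (n k t x : ℕ) (hn : 0 < n) (hk : k ≤ n) (hx : x ≤ n) :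
    (blStep n k)^[t] (fun y : ℕ => f1 n y) x = (1 - 2 * (k : ℝ) / n) ^ t * f1 n x := by
  induction t generalizing x with
  | zero => simp
  | succ t ih =>
    rw [Function.iterate_succ_apply']
    have hb : blStep n k ((blStep n k)^[t] (fun y : ℕ => f1 n y)) x
        = ∑ y ∈ Finset.range (n+1),
          blTrans n k x y * ((blStep n k)^[t] (fun y : ℕ => f1 n y) y) := rfl
    rw [hb]
    have : ∀ y ∈ Finset.range (n+1),
        blTrans n k x y * ((blStep n k)^[t] (fun y : ℕ => f1 n y) y)
        = blTrans n k x y * ((1 - 2 * (k : ℝ) / n) ^ t * f1 n y) := by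
      intro y hy
      rw [Finset.mem_range] at hy
      rw [ih y (by omega)]
    rw [Finset.sum_congr rfl this]
    have : ∑ y ∈ Finset.range (n+1),
        blTrans n k x y * ((1 - 2 * (k : ℝ) / n) ^ t * f1 n y)
        = (1 - 2 * (k : ℝ) / n) ^ t *
          ∑ y ∈ Finset.range (n+1), blTrans n k x y * f1 n y := by
      rw [Finset.mul_sum]
      apply Finset.sum_congr rfl
      intro y _
      ring
    rw [this]
    have hstep := step_f1 n k x hn hk hx
    unfold blStep at hstep
    rw [hstep]
    ring
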